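/- arXiv:2001.07432 — 4 statements merged into one kernel-verified Lean document; each statement's English description precedes it below -/
import Mathlib

section
/- With the module M of basis e(a), a ∈ ℤ/kℤ, over the rank-2 quantum torus A_{q^h} defined by e(a)·X = α·e(a+1) and e(a)·Y = α^{-1}β(q^h)^{a-1}·e(a−1) (α, β ∈ K*, q of order m, h ∣ m, k = m/h), the module M is simple: its only submodules are 0 and M. -/
/-- The standard basis vector `e a` of the `K`-vector space `ZMod k → K`. -/
def e (K : Type*) [Field K] (k : ℕ) (a : ZMod k) : ZMod k → K := Pi.single a 1

/-- The module `M(α,β)` over the rank-2 quantum torus `A_{q^h}` with basis `e a`,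
`a ∈ ℤ/kℤ`, and actions `e(a)·X = α e(a+1)`, `e(a)·Y = α⁻¹β(q^h)^(a-1) e(a-1)`,
is simple: its only submodules are `0` and `M`. -/
theorem stmt_4 {K : Type*} [Field K] [IsAlgClosed K] (m h k : ℕ) (hm : 0 < m) (q : Kˣ)
    (hq : orderOf q = m) (hh : 0 < h) (hdvd : h ∣ m) (hk : k = m / h)
    (α β : K) (hα : α ≠ 0) (hβ : β ≠ 0)
    (X Y : (ZMod k → K) →ₗ[K] (ZMod k → K))
    (hX : ∀ a : ZMod k, X (e K k a) = α • e K k (a + 1))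
    (hY : ∀ a : ZMod k, Y (e K k a) =
      (α⁻¹ * β * ((q : K) ^ h) ^ (a - 1).val) • e K k (a - 1))
    (P : Submodule K (ZMod k → K))
    (hPX : ∀ v ∈ P, X v ∈ P) (hPY : ∀ v ∈ P, Y v ∈ P) :
    P = ⊥ ∨ P = ⊤ := by
  classical
  have hk0 : 0 < k := hk ▸ Nat.div_pos (Nat.le_of_dvd hm hdvd) hh
  haveI : NeZero k := ⟨hk0.ne'⟩
  -- the order of q^h is k
  have hqh : orderOf (q ^ h) = k := by
    rw [orderOf_pow' _ hh.ne', hq, Nat.gcd_eq_right hdvd, hk]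
  set lam : ZMod k → K := fun a => β * ((q : K) ^ h) ^ a.val with hlamdef
  -- lam is injective
  have hlaminj : Function.Injective lam := by
    intro a b hab
    have h1 : ((q : K) ^ h) ^ a.val = ((q : K) ^ h) ^ b.val := mul_left_cancel₀ hβ hab
    have h2 : (q ^ h) ^ a.val = (q ^ h) ^ b.val := by
      apply Units.ext; push_cast; exact h1
    have := pow_injOn_Iio_orderOf (x := q ^ h)
      (by rw [hqh]; exact Set.mem_Iio.2 (ZMod.val_lt a))
      (by rw [hqh]; exact Set.mem_Iio.2 (ZMod.val_lt b)) h2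
    exact ZMod.val_injective k this
  -- action of Y ∘ X on basis vectors
  have hDe : ∀ a : ZMod k, Y (X (e K k a)) = lam a • e K k a := by
    intro a
    rw [hX, map_smul, hY, add_sub_cancel_right, smul_smul, hlamdef]
    congr 1
    field_simp
  -- action of Y ∘ X on general vectors
  have hsum : ∀ v : ZMod k → K, v = ∑ b : ZMod k, v b • e K k b := by
    intro v
    have : ∀ b : ZMod k, v b • e K k b = Pi.single b (v b) := by
      intro b
      rw [e, ← Pi.single_smul, smul_eq_mul, mul_one]
    simp_rw [this, Finset.univ_sum_single]
  have hD : ∀ v : ZMod k → K, Y (X v) = fun a => lam a * v a := by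
    intro v
    conv_lhs => rw [hsum v]
    rw [map_sum, map_sum]
    simp_rw [map_smul, hDe]
    funext a
    rw [Finset.sum_apply]
    simp only [Pi.smul_apply, e, Pi.single_apply, smul_eq_mul, mul_ite, mul_one, mul_zero]
    rw [Finset.sum_ite_eq]
    simp [mul_comm]
  -- key induction: P is stable under multiplying by products of (lam a - lam c)
  have key : ∀ s : Finset (ZMod k), ∀ v ∈ P,
      (fun a => (∏ c ∈ s, (lam a - lam c)) * v a) ∈ P := by
    intro s
    induction s using Finset.induction_on with
    | empty => intro v hv; simpa using hv
    | @insert c s hc ih =>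
      intro v hv
      have h1 := ih v hv
      have h2 : Y (X (fun a => (∏ c ∈ s, (lam a - lam c)) * v a)) ∈ P :=
        hPY _ (hPX _ h1)
      have heq : (fun a => (∏ c' ∈ insert c s, (lam a - lam c')) * v a)
          = Y (X (fun a => (∏ c ∈ s, (lam a - lam c)) * v a))
            - lam c • (fun a => (∏ c ∈ s, (lam a - lam c)) * v a) := by
        rw [hD]
        funext a
        simp only [Pi.sub_apply, Pi.smul_apply, smul_eq_mul, Finset.prod_insert hc]
        ring
      rw [heq]
      exact P.sub_mem h2 (P.smul_mem _ h1)
  by_cases hP : P = ⊥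
  · exact Or.inl hP
  right
  obtain ⟨v, hvP, hv0⟩ := Submodule.exists_mem_ne_zero_of_ne_bot hP
  obtain ⟨a₀, ha₀⟩ : ∃ a₀, v a₀ ≠ 0 := by
    by_contra hcon
    push_neg at hcon
    exact hv0 (funext hcon)
  -- extract the basis vector e a₀
  set w : ZMod k → K := fun a => (∏ c ∈ Finset.univ.erase a₀, (lam a - lam c)) * v a with hw
  have hwP : w ∈ P := key _ v hvP
  have hwa₀ : w a₀ ≠ 0 := by
    apply mul_ne_zero _ ha₀
    apply Finset.prod_ne_zero_iff.2
    intro c hc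
    exact sub_ne_zero.2 fun hcc => (Finset.mem_erase.1 hc).1 (hlaminj hcc).symm
  have hwe : w = w a₀ • e K k a₀ := by
    funext a
    by_cases hA : a = a₀
    · subst hA; simp [e, Pi.single_apply]
    · have : (∏ c ∈ Finset.univ.erase a₀, (lam a - lam c)) = 0 :=
        Finset.prod_eq_zero (Finset.mem_erase.2 ⟨hA, Finset.mem_univ a⟩) (by simp)
      simp [hw, this, e, Pi.single_apply, hA]
  have hea₀ : e K k a₀ ∈ P := by
    rw [hwe] at hwP
    have := P.smul_mem (w a₀)⁻¹ hwP
    rwa [smul_smul, inv_mul_cancel₀ hwa₀, one_smul] at this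
  -- all basis vectors are in P
  have hstep : ∀ a : ZMod k, e K k a ∈ P → e K k (a + 1) ∈ P := by
    intro a ha
    have := P.smul_mem α⁻¹ (hPX _ ha)
    rwa [hX, smul_smul, inv_mul_cancel₀ hα, one_smul] at this
  have hall : ∀ n : ℕ, e K k (a₀ + n) ∈ P := by
    intro n
    induction n with
    | zero => simpa using hea₀
    | succ n ih =>
      have := hstep _ ih
      rwa [show a₀ + (n : ZMod k) + 1 = a₀ + ((n : ℕ) + 1 : ℕ) by push_cast; ring] at this
  have heP : ∀ b : ZMod k, e K k b ∈ P := by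
    intro b
    have := hall (b - a₀).val
    rwa [ZMod.natCast_val, ZMod.cast_id, add_sub_cancel] at this
  rw [eq_top_iff]
  intro u _
  rw [hsum u]
  exact Submodule.sum_mem P fun b _ => P.smul_mem _ (heP b)
end

section
/- Let K be a field, q ∈ K* of order m, h ∣ m, k = m/h. For α, β, α', β' ∈ K* with α^k = α'^k, and β = β'(q^h)^r for some r ∈ ℤ/kℤ, the simple modules M(α,β) and M(α',β') over the rank-2 quantum torus A_{q^h} (with actions e(a)·X = α e(a+1), e(a)·Y = α^{-1}β(q^h)^{a-1} e(a−1), and similarly for primed parameters) are isomorphic via φ(e(a)) = (α^{-1}α')^a e(a + r). -/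
section RootOfUnity

variable {M : Type*} [CommMonoid M] {k : ℕ} [NeZero k] {u : M}

theorem pow_val_add (hu : u ^ k = 1) (a b : ZMod k) :
    u ^ (a + b).val = u ^ a.val * u ^ b.val :=
  (AddChar.zmodChar k hu).map_add_eq_mul a b

theorem pow_val_add_one (hu : u ^ k = 1) (a : ZMod k) :
    u ^ (a + 1).val = u ^ a.val * u := by
  rw [pow_val_add hu, ← Nat.cast_one, ZMod.val_natCast, ← pow_eq_pow_mod 1 hu, pow_one]

end RootOfUnity

theorem LinearMap.bijective_of_apply_single_eq_smul_single {K ι : Type*} [Field K] [Fintype ι]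
    [DecidableEq ι] (φ : (ι → K) →ₗ[K] (ι → K)) (σ : ι ≃ ι) (w : ι → K) (hw : ∀ i, w i ≠ 0)
    (hφ : ∀ i, φ (Pi.single i 1) = w i • Pi.single (σ i) 1) : Function.Bijective φ := by
  have hsurj : Function.Surjective φ := by
    rw [← LinearMap.range_eq_top, eq_top_iff, ← (Pi.basisFun K ι).span_eq, Submodule.span_le]
    rintro _ ⟨j, rfl⟩
    refine ⟨(w (σ.symm j))⁻¹ • Pi.single (σ.symm j) 1, ?_⟩
    simp [hφ, smul_smul, hw]
  exact ⟨LinearMap.injective_iff_surjective.mpr hsurj, hsurj⟩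

theorem ext_e {K M : Type*} [Field K] [AddCommMonoid M] [Module K M] {k : ℕ} [NeZero k]
    {f g : (ZMod k → K) →ₗ[K] M} (hfg : ∀ a, f (e K k a) = g (e K k a)) : f = g :=
  (Pi.basisFun K (ZMod k)).ext fun a => by simpa [e] using hfg a

theorem stmt_7_general {K : Type*} [Field K] (m h k : ℕ) (hm : 0 < m) (q : Kˣ)
    (hq : orderOf q = m) (hh : 0 < h) (hdvd : h ∣ m) (hk : k = m / h)
    (α β α' β' : K) (hα : α ≠ 0)
    (r : ZMod k) (hαα' : α ^ k = α' ^ k) (hββ' : β = β' * ((q : K) ^ h) ^ r.val)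
    (X Y X' Y' : (ZMod k → K) →ₗ[K] (ZMod k → K))
    (hX : ∀ a : ZMod k, X (e K k a) = α • e K k (a + 1))
    (hY : ∀ a : ZMod k, Y (e K k a) =
      (α⁻¹ * β * ((q : K) ^ h) ^ (a - 1).val) • e K k (a - 1))
    (hX' : ∀ a : ZMod k, X' (e K k a) = α' • e K k (a + 1))
    (hY' : ∀ a : ZMod k, Y' (e K k a) =
      (α'⁻¹ * β' * ((q : K) ^ h) ^ (a - 1).val) • e K k (a - 1))
    (φ : (ZMod k → K) →ₗ[K] (ZMod k → K))
    (hφ : ∀ a : ZMod k, φ (e K k a) = (α⁻¹ * α') ^ a.val • e K k (a + r)) :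
    (∀ v, φ (X v) = X' (φ v)) ∧ (∀ v, φ (Y v) = Y' (φ v)) ∧
      Function.Bijective φ := by
  have hk0 : 0 < k := hk ▸ Nat.div_pos (Nat.le_of_dvd hm hdvd) hh
  have : NeZero k := ⟨hk0.ne'⟩
  have hα' : α' ≠ 0 := by
    rintro rfl
    exact pow_ne_zero k hα (hαα'.trans (zero_pow hk0.ne'))
  have hc : (α⁻¹ * α') ^ k = 1 := by
    rw [mul_pow, inv_pow, ← hαα', inv_mul_cancel₀ (pow_ne_zero k hα)]
  have hd : ((q : K) ^ h) ^ k = 1 := by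
    rw [← pow_mul, hk, Nat.mul_div_cancel' hdvd, ← Units.val_pow_eq_pow_val, ← hq,
      pow_orderOf_eq_one, Units.val_one]
  refine ⟨fun v => LinearMap.congr_fun (ext_e (f := φ ∘ₗ X) (g := X' ∘ₗ φ) fun a => ?_) v,
    fun v => LinearMap.congr_fun (ext_e (f := φ ∘ₗ Y) (g := Y' ∘ₗ φ) fun a => ?_) v,
    φ.bijective_of_apply_single_eq_smul_single (Equiv.addRight r) _
      (fun a => pow_ne_zero _ (mul_ne_zero (inv_ne_zero hα) hα')) hφ⟩
  · simp only [LinearMap.comp_apply, hX, hX', hφ, map_smul, smul_smul, add_right_comm a 1 r,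
      pow_val_add_one hc]
    congr 1
    field_simp
  · obtain ⟨b, rfl⟩ : ∃ b, a = b + 1 := ⟨a - 1, (sub_add_cancel a 1).symm⟩
    simp only [LinearMap.comp_apply, hY, hY', hφ, map_smul, smul_smul, add_sub_cancel_right,
      add_right_comm b 1 r, pow_val_add hd, pow_val_add_one hc, hββ']
    congr 1
    field_simp

/-- If `α^k = α'^k` and `β = β'(q^h)^r` for some `r ∈ ℤ/kℤ`, then the modules
`M(α,β)` and `M(α',β')` over the rank-2 quantum torus `A_{q^h}` are isomorphic via
`φ(e a) = (α⁻¹α')^a e (a + r)`. -/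
theorem stmt_7 {K : Type*} [Field K] (m h k : ℕ) (hm : 0 < m) (q : Kˣ)
    (hq : orderOf q = m) (hh : 0 < h) (hdvd : h ∣ m) (hk : k = m / h)
    (α β α' β' : K) (hα : α ≠ 0) (hβ : β ≠ 0) (hα' : α' ≠ 0) (hβ' : β' ≠ 0)
    (r : ZMod k) (hαα' : α ^ k = α' ^ k) (hββ' : β = β' * ((q : K) ^ h) ^ r.val)
    (X Y X' Y' : (ZMod k → K) →ₗ[K] (ZMod k → K))
    (hX : ∀ a : ZMod k, X (e K k a) = α • e K k (a + 1))
    (hY : ∀ a : ZMod k, Y (e K k a) =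
      (α⁻¹ * β * ((q : K) ^ h) ^ (a - 1).val) • e K k (a - 1))
    (hX' : ∀ a : ZMod k, X' (e K k a) = α' • e K k (a + 1))
    (hY' : ∀ a : ZMod k, Y' (e K k a) =
      (α'⁻¹ * β' * ((q : K) ^ h) ^ (a - 1).val) • e K k (a - 1))
    (φ : (ZMod k → K) →ₗ[K] (ZMod k → K))
    (hφ : ∀ a : ZMod k, φ (e K k a) = (α⁻¹ * α') ^ a.val • e K k (a + r)) :
    (∀ v, φ (X v) = X' (φ v)) ∧ (∀ v, φ (Y v) = Y' (φ v)) ∧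
      Function.Bijective φ :=
  stmt_7_general m h k hm q hq hh hdvd hk α β α' β' hα r hαα' hββ' X Y X' Y' hX hY hX' hY' φ hφ
end

section
/- Let K be a field, q ∈ K* of order m, h ∣ m, k = m/h. If ψ: M(α,β) → M(α',β') is an isomorphism of modules over the rank-2 quantum torus A_{q^h} (modules as in the standard construction with basis e(a), a ∈ ℤ/kℤ), then β = β'(q^h)^r for some r ∈ ℤ/kℤ, and α^k = α'^k. -/
/-- If `ψ : M(α,β) → M(α',β')` is an isomorphism of modules over the rank-2 quantum
torus `A_{q^h}`, then `β = β'(q^h)^r` for some `r ∈ ℤ/kℤ`, and `α^k = α'^k`. -/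
theorem stmt_8 {K : Type*} [Field K] (m h k : ℕ) (hm : 0 < m) (q : Kˣ)
    (hq : orderOf q = m) (hh : 0 < h) (hdvd : h ∣ m) (hk : k = m / h)
    (α β α' β' : K) (hα : α ≠ 0) (hβ : β ≠ 0) (hα' : α' ≠ 0) (hβ' : β' ≠ 0)
    (X Y X' Y' : (ZMod k → K) →ₗ[K] (ZMod k → K))
    (hX : ∀ a : ZMod k, X (e K k a) = α • e K k (a + 1))
    (hY : ∀ a : ZMod k, Y (e K k a) =
      (α⁻¹ * β * ((q : K) ^ h) ^ (a - 1).val) • e K k (a - 1))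
    (hX' : ∀ a : ZMod k, X' (e K k a) = α' • e K k (a + 1))
    (hY' : ∀ a : ZMod k, Y' (e K k a) =
      (α'⁻¹ * β' * ((q : K) ^ h) ^ (a - 1).val) • e K k (a - 1))
    (ψ : (ZMod k → K) ≃ₗ[K] (ZMod k → K))
    (hψX : ∀ v, ψ (X v) = X' (ψ v)) (hψY : ∀ v, ψ (Y v) = Y' (ψ v)) :
    (∃ r : ZMod k, β = β' * ((q : K) ^ h) ^ r.val) ∧ α ^ k = α' ^ k := by
  have hk0 : 0 < k := hk ▸ Nat.div_pos (Nat.le_of_dvd hm hdvd) hh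
  haveI : NeZero k := ⟨hk0.ne'⟩
  have hhk : h * k = m := by rw [hk, Nat.mul_div_cancel' hdvd]
  set w : Kˣ := q ^ h with hw
  have hwk : w ^ k = 1 := by
    rw [hw, ← pow_mul, hhk, ← hq, pow_orderOf_eq_one]
  have hord : orderOf w ∣ k := orderOf_dvd_of_pow_eq_one hwk
  have hwc : ((q : K) ^ h) = (w : K) := by rw [hw]; push_cast; ring
  have hadd : ∀ x y : ZMod k, (w : K) ^ (x + y).val = (w : K) ^ x.val * (w : K) ^ y.val := by
    intro x y
    have h2 : w ^ (x + y).val = w ^ (x.val + y.val) := by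
      rw [pow_eq_pow_iff_modEq, ZMod.val_add]
      exact (Nat.mod_modEq _ k).of_dvd hord
    calc (w : K) ^ (x + y).val = ((w ^ (x + y).val : Kˣ) : K) := by push_cast; ring
      _ = ((w ^ (x.val + y.val) : Kˣ) : K) := by rw [h2]
      _ = (w : K) ^ x.val * (w : K) ^ y.val := by push_cast; ring
  have hwne : (w : K) ≠ 0 := Units.ne_zero w
  have hene : e K k 0 ≠ 0 := by
    intro h0
    have := congrFun h0 0
    simp [e, Pi.single_apply] at this
  set v : ZMod k → K := ψ (e K k 0) with hv
  have hvne : v ≠ 0 := fun h0 => hene (ψ.map_eq_zero_iff.mp (hv ▸ h0))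
  obtain ⟨a₀, ha₀⟩ := Function.ne_iff.mp hvne
  simp only [Pi.zero_apply] at ha₀
  have hvsum : v = ∑ a : ZMod k, v a • e K k a :=
    calc v = ∑ a : ZMod k, Pi.single a (v a) := (Finset.univ_sum_single v).symm
      _ = ∑ a : ZMod k, v a • e K k a := Finset.sum_congr rfl fun a _ => by
            unfold e; rw [← Pi.single_smul, smul_eq_mul, mul_one]
  have hT' : X' (Y' v) = ∑ a : ZMod k, (v a * (β' * (w : K) ^ (a - 1).val)) • e K k a := by
    conv_lhs => rw [hvsum]
    rw [map_sum, map_sum]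
    refine Finset.sum_congr rfl fun a _ => ?_
    rw [map_smul, hY' a, map_smul, map_smul, hX' (a - 1), sub_add_cancel, hwc,
      smul_smul, smul_smul]
    congr 1
    field_simp
  have hL : ψ (X (Y (e K k 0))) = (β * (w : K) ^ ((0 : ZMod k) - 1).val) • v := by
    rw [hY 0, map_smul, hX (0 - 1), sub_add_cancel, hwc, smul_smul, map_smul, ← hv]
    congr 1
    field_simp
  have hmain : (β * (w : K) ^ ((0 : ZMod k) - 1).val) • v = X' (Y' v) := by
    rw [← hL, hψX, hψY, ← hv]
  have heval : β * (w : K) ^ ((0 : ZMod k) - 1).val * v a₀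
      = v a₀ * (β' * (w : K) ^ (a₀ - 1).val) := by
    have h3 := congrFun (hmain.trans hT') a₀
    simp only [Pi.smul_apply, smul_eq_mul, Finset.sum_apply] at h3
    rw [h3, Finset.sum_eq_single a₀]
    · simp [e, Pi.single_apply]
    · intro b _ hb
      simp [e, Pi.single_apply, Ne.symm hb]
    · simp
  have hbeta : β * (w : K) ^ ((0 : ZMod k) - 1).val
      = β' * (w : K) ^ (a₀ - 1).val :=
    mul_right_cancel₀ ha₀ (heval.trans (mul_comm _ _))
  constructor
  · refine ⟨a₀, ?_⟩
    have h1 : (w : K) ^ (a₀ - 1).val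
        = (w : K) ^ a₀.val * (w : K) ^ ((0 : ZMod k) - 1).val := by
      have h4 := hadd a₀ (0 - 1)
      rw [show a₀ + ((0 : ZMod k) - 1) = a₀ - 1 by ring] at h4
      exact h4
    have hwp : (w : K) ^ ((0 : ZMod k) - 1).val ≠ 0 := pow_ne_zero _ hwne
    rw [hwc]
    refine mul_right_cancel₀ hwp ?_
    rw [hbeta, h1]
    ring
  · have hXn : ∀ (n : ℕ) (a : ZMod k), (X ^ n) (e K k a) = α ^ n • e K k (a + n) := by
      intro n
      induction n with
      | zero => intro a; simp
      | succ n ih =>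
        intro a
        rw [pow_succ, Module.End.mul_apply, hX, map_smul, ih, smul_smul, ← pow_succ']
        congr 2
        push_cast
        ring
    have hX'n : ∀ (n : ℕ) (a : ZMod k), (X' ^ n) (e K k a) = α' ^ n • e K k (a + n) := by
      intro n
      induction n with
      | zero => intro a; simp
      | succ n ih =>
        intro a
        rw [pow_succ, Module.End.mul_apply, hX', map_smul, ih, smul_smul, ← pow_succ']
        congr 2
        push_cast
        ring
    have hcomm : ∀ (n : ℕ) (u : ZMod k → K), ψ ((X ^ n) u) = (X' ^ n) (ψ u) := by
      intro n
      induction n with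
      | zero => intro u; simp
      | succ n ih =>
        intro u
        rw [pow_succ', pow_succ', Module.End.mul_apply, Module.End.mul_apply, hψX, ih]
    have hX'kv : (X' ^ k) v = α' ^ k • v := by
      conv_lhs => rw [hvsum]
      conv_rhs => rw [hvsum]
      rw [map_sum, Finset.smul_sum]
      refine Finset.sum_congr rfl fun a _ => ?_
      rw [map_smul, hX'n k a, ZMod.natCast_self, add_zero, smul_smul, smul_smul, mul_comm]
    have hkey := hcomm k (e K k 0)
    rw [hXn k 0, ZMod.natCast_self, add_zero, map_smul, ← hv, hX'kv] at hkey
    have h5 := congrFun hkey a₀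
    simp only [Pi.smul_apply, smul_eq_mul] at h5
    exact mul_right_cancel₀ ha₀ h5
end

section
/- Let q be a primitive m-th root of unity in a field K and h a positive divisor of m, k = m/h. Every simple module over the rank-2 quantum torus A_{q^h} (generators X^{±1}, Y^{±1}, relation XY = q^h YX) over an algebraically closed field K that is finite-dimensional is isomorphic to M(α,β) for some α, β ∈ K*, where M(α,β) is the k-dimensional module with basis e(a), a ∈ ℤ/kℤ, and actions e(a)·X = α e(a+1), e(a)·Y = α^{-1}β(q^h)^{a-1} e(a−1). -/
open Module Submodule

theorem mul_pow_of_mul_eq_smul_mul {K A : Type*} [CommSemiring K] [Semiring A] [Algebra K A]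
    {x y : A} {ζ : K} (h : y * x = ζ • (x * y)) (n : ℕ) : y * x ^ n = ζ ^ n • (x ^ n * y) := by
  induction n with
  | zero => simp
  | succ n ih =>
    rw [pow_succ, ← mul_assoc, ih, smul_mul_assoc, mul_assoc, h, mul_smul_comm, smul_smul,
      ← pow_succ, mul_assoc]

theorem Module.Basis.equivFun_conj_single {K V ι : Type*} [Field K] [AddCommGroup V]
    [Module K V] [Fintype ι] [DecidableEq ι] (b : Basis ι K V) {T : End K V} {i j : ι} {c : K}
    (hT : T (b i) = c • b j) : b.equivFun.conj T (Pi.single i 1) = c • Pi.single j 1 := by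
  ext l
  simp [LinearEquiv.conj_apply, hT, Pi.single_apply, Finsupp.single_apply, eq_comm]

section

variable {K V : Type*} [Field K] [AddCommGroup V] [Module K V]

def IsIrreduciblePair (X Y : End K V) : Prop :=
  ∀ P : Submodule K V, (∀ v ∈ P, X v ∈ P) → (∀ v ∈ P, Y v ∈ P) → P = ⊥ ∨ P = ⊤

namespace IsIrreduciblePair

variable {X Y : End K V}

theorem span_range_eq_top {ι : Type*} (hirr : IsIrreduciblePair X Y) {w : ι → V} {i₀ : ι}
    (hi₀ : w i₀ ≠ 0) (hX : ∀ i, X (w i) ∈ span K (Set.range w))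
    (hY : ∀ i, Y (w i) ∈ span K (Set.range w)) : span K (Set.range w) = ⊤ := by
  have invariant (T : End K V) (hT : ∀ i, T (w i) ∈ span K (Set.range w)) :
      ∀ v ∈ span K (Set.range w), T v ∈ span K (Set.range w) := fun v hv =>
    span_le (p := (span K (Set.range w)).comap T).mpr (Set.range_subset_iff.mpr hT) hv
  refine (hirr _ (invariant X hX) (invariant Y hY)).resolve_left fun hbot => hi₀ ?_
  simpa [hbot] using subset_span (R := K) (Set.mem_range_self (f := w) i₀)

variable [IsAlgClosed K] [FiniteDimensional K V] [Nontrivial V]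

theorem exists_eq_smul_one (hirr : IsIrreduciblePair X Y) {T : End K V} (hTX : Commute T X)
    (hTY : Commute T Y) : ∃ ξ : K, T = ξ • 1 := by
  obtain ⟨ξ, hξ⟩ := T.exists_eigenvalue
  have invariant (S : End K V) (hS : Commute T S) :
      ∀ v ∈ T.eigenspace ξ, S v ∈ T.eigenspace ξ := by
    intro v hv
    rw [End.mem_eigenspace_iff] at hv ⊢
    rw [← End.mul_apply, hS.eq, End.mul_apply, hv, map_smul]
  have htop := (hirr _ (invariant X hTX) (invariant Y hTY)).resolve_left hξ
  exact ⟨ξ, LinearMap.ext fun v => End.mem_eigenspace_iff.mp (htop ▸ mem_top)⟩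

theorem exists_pow_eq_smul_one {ζ : K} {k : ℕ} [NeZero k] (hirr : IsIrreduciblePair X Y)
    (hζ : ζ ^ k = 1) (hX : Function.Injective X) (hrel : Y * X = ζ • (X * Y)) :
    ∃ α : K, α ≠ 0 ∧ X ^ k = α ^ k • 1 := by
  have hXkY : Commute (X ^ k) Y := by
    rw [Commute, SemiconjBy, mul_pow_of_mul_eq_smul_mul hrel, hζ, one_smul]
  obtain ⟨ξ, hξ⟩ := hirr.exists_eq_smul_one ((Commute.refl X).pow_left k) hXkY
  obtain ⟨α, rfl⟩ := IsAlgClosed.exists_pow_nat_eq ξ (NeZero.pos k)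
  refine ⟨α, ?_, hξ⟩
  rintro rfl
  obtain ⟨v, hv⟩ := exists_ne (0 : V)
  refine hv (hX.iterate k ?_)
  rw [← End.coe_pow, hξ, map_zero]
  simp [NeZero.ne k]

end IsIrreduciblePair

namespace Module.End

section ScaledOrbit

variable (X : End K V) (α : K) (k : ℕ) (v : V)

def scaledOrbit (a : ZMod k) : V := (α ^ a.val)⁻¹ • (X ^ a.val) v

variable {X α k v}

theorem pow_apply_eq_smul_scaledOrbit (hXk : X ^ k = α ^ k • 1) (hα : α ≠ 0) (n : ℕ) :
    (X ^ n) v = α ^ n • X.scaledOrbit α k v n := by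
  have hn : X ^ n = (α ^ k) ^ (n / k) • X ^ (n % k) := by
    conv_lhs => rw [← Nat.div_add_mod n k, pow_add, pow_mul, hXk, smul_pow, one_pow,
      smul_mul_assoc, one_mul]
  have hα' : α ^ n = (α ^ k) ^ (n / k) * α ^ (n % k) := by
    rw [← pow_mul, ← pow_add, Nat.div_add_mod]
  rw [scaledOrbit, ZMod.val_natCast, hn, LinearMap.smul_apply, smul_smul, hα', mul_assoc,
    mul_inv_cancel₀ (pow_ne_zero _ hα), mul_one]

theorem apply_scaledOrbit [NeZero k] (hXk : X ^ k = α ^ k • 1) (hα : α ≠ 0) (a : ZMod k) :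
    X (X.scaledOrbit α k v a) = α • X.scaledOrbit α k v (a + 1) := by
  have h := pow_apply_eq_smul_scaledOrbit (v := v) hXk hα (a.val + 1)
  rw [pow_succ', mul_apply] at h
  rw [scaledOrbit, map_smul, h, smul_smul, pow_succ, inv_mul_cancel_left₀ (pow_ne_zero _ hα)]
  push_cast
  rw [ZMod.natCast_zmod_val]

theorem scaledOrbit_ne_zero (hX : Function.Injective X) (hα : α ≠ 0) (hv : v ≠ 0) (a : ZMod k) :
    X.scaledOrbit α k v a ≠ 0 := by
  have hXn : Function.Injective (X ^ a.val) := by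
    rw [coe_pow]
    exact hX.iterate _
  exact smul_ne_zero (inv_ne_zero (pow_ne_zero _ hα)) ((map_ne_zero_iff _ hXn).mpr hv)

variable {Y : End K V} {ζ β : K}

theorem mul_apply_scaledOrbit (hrel : Y * X = ζ • (X * Y)) (hv : (X * Y) v = β • v)
    (a : ZMod k) : (X * Y) (X.scaledOrbit α k v a) = (β * ζ ^ a.val) • X.scaledOrbit α k v a := by
  have hcomm : X * Y * X ^ a.val = ζ ^ a.val • (X ^ a.val * (X * Y)) := by
    rw [mul_assoc, mul_pow_of_mul_eq_smul_mul hrel, mul_smul_comm, ← mul_assoc, ← pow_succ',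
      pow_succ, mul_assoc]
  rw [scaledOrbit, map_smul, ← mul_apply, hcomm, LinearMap.smul_apply, mul_apply, hv, map_smul]
  simp only [smul_smul]
  ring_nf

theorem apply_scaledOrbit_eq_smul_scaledOrbit_sub_one [NeZero k] (hζ : ζ ^ k = 1)
    (hX : Function.Injective X) (hXk : X ^ k = α ^ k • 1) (hα : α ≠ 0) (hrel : Y * X = ζ • (X * Y))
    (hv : (X * Y) v = β • v) (a : ZMod k) :
    Y (X.scaledOrbit α k v a) =
      (α⁻¹ * (β * ζ) * ζ ^ (a - 1).val) • X.scaledOrbit α k v (a - 1) := by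
  have hζa : ζ ^ a.val = ζ * ζ ^ (a - 1).val := by
    rw [← pow_succ', pow_eq_pow_mod ((a - 1).val + 1) hζ, ← ZMod.val_natCast]
    push_cast
    rw [ZMod.natCast_zmod_val, sub_add_cancel]
  apply hX
  rw [← mul_apply, mul_apply_scaledOrbit hrel hv, map_smul, apply_scaledOrbit hXk hα,
    sub_add_cancel, smul_smul, hζa]
  field_simp

theorem linearIndependent_scaledOrbit [NeZero k] (hζ : IsPrimitiveRoot ζ k)
    (hX : Function.Injective X) (hα : α ≠ 0) (hβ : β ≠ 0) (hrel : Y * X = ζ • (X * Y)) (hv : (X * Y).HasEigenvector β v) :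
    LinearIndependent K (X.scaledOrbit α k v) := by
  refine eigenvectors_linearIndependent' (X * Y) (fun a => β * ζ ^ a.val) ?_ _ fun a =>
    ⟨mem_eigenspace_iff.mpr (mul_apply_scaledOrbit hrel hv.apply_eq_smul a),
      scaledOrbit_ne_zero hX hα hv.2 a⟩
  intro a b hab
  exact ZMod.val_injective k (hζ.pow_inj a.val_lt b.val_lt (mul_left_cancel₀ hβ hab))

end ScaledOrbit

end Module.End

open Module.End in
theorem IsIrreduciblePair.exists_basis [IsAlgClosed K] [FiniteDimensional K V] [Nontrivial V]
    {X Y : End K V} {ζ : K} {k : ℕ} [NeZero k] (hζ : IsPrimitiveRoot ζ k)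
    (hX : Function.Injective X) (hY : Function.Injective Y) (hrel : Y * X = ζ • (X * Y)) (hirr : IsIrreduciblePair X Y) :
    ∃ α β : K, α ≠ 0 ∧ β ≠ 0 ∧ ∃ b : Basis (ZMod k) K V,
      (∀ a, X (b a) = α • b (a + 1)) ∧ ∀ a, Y (b a) = (α⁻¹ * β * ζ ^ (a - 1).val) • b (a - 1) := by
  obtain ⟨α, hα, hXk⟩ := hirr.exists_pow_eq_smul_one hζ.pow_eq_one hX hrel
  obtain ⟨β, hβ⟩ := (X * Y).exists_eigenvalue
  obtain ⟨v, hv⟩ := hβ.exists_hasEigenvector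
  have hβ0 : β ≠ 0 := by
    rintro rfl
    exact hv.2 ((hX.comp hY) (by simpa using hv.apply_eq_smul))
  have hXw := apply_scaledOrbit (v := v) hXk hα
  have hYw := apply_scaledOrbit_eq_smul_scaledOrbit_sub_one hζ.pow_eq_one hX hXk hα hrel
    hv.apply_eq_smul
  have hspan : span K (Set.range (X.scaledOrbit α k v)) = ⊤ :=
    hirr.span_range_eq_top (scaledOrbit_ne_zero hX hα hv.2 0)
      (fun a => hXw a ▸ smul_mem _ _ (subset_span (Set.mem_range_self _)))
      (fun a => hYw a ▸ smul_mem _ _ (subset_span (Set.mem_range_self _)))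
  refine ⟨α, β * ζ, hα, mul_ne_zero hβ0 (hζ.ne_zero (NeZero.ne k)),
    Basis.mk (linearIndependent_scaledOrbit hζ hX hα hβ0 hrel hv) hspan.ge,
    fun a => by simpa using hXw a, fun a => by simpa using hYw a⟩

end

/-- Over an algebraically closed field `K`, every finite-dimensional simple module `V`
over the rank-2 quantum torus `A_{q^h}` (encoded as a pair of invertible operators
`X, Y` with `XY = q^h·YX` and no nontrivial invariant subspaces) is isomorphic to the
standard module `M(α,β)` for some `α, β ∈ K*`. -/
theorem stmt_16 {K : Type*} [Field K] [IsAlgClosed K] (m h k : ℕ) (hm : 0 < m)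
    (q : Kˣ) (hq : orderOf q = m) (hh : 0 < h) (hdvd : h ∣ m) (hk : k = m / h)
    (V : Type*) [AddCommGroup V] [Module K V] [FiniteDimensional K V] [Nontrivial V]
    (X Y : V →ₗ[K] V) (hXb : Function.Bijective X) (hYb : Function.Bijective Y)
    (hrel : ∀ v, Y (X v) = ((q : K) ^ h) • X (Y v))
    (hsimple : ∀ P : Submodule K V,
      (∀ v ∈ P, X v ∈ P) → (∀ v ∈ P, Y v ∈ P) → P = ⊥ ∨ P = ⊤) :
    ∃ (α β : K), α ≠ 0 ∧ β ≠ 0 ∧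
      ∃ (Xm Ym : (ZMod k → K) →ₗ[K] (ZMod k → K)) (φ : (ZMod k → K) ≃ₗ[K] V),
        (∀ a : ZMod k, Xm (e K k a) = α • e K k (a + 1)) ∧
        (∀ a : ZMod k, Ym (e K k a) =
          (α⁻¹ * β * ((q : K) ^ h) ^ (a - 1).val) • e K k (a - 1)) ∧
        (∀ v, φ (Xm v) = X (φ v)) ∧ (∀ v, φ (Ym v) = Y (φ v)) := by
  have : NeZero k := ⟨hk ▸ (Nat.div_pos (Nat.le_of_dvd hm hdvd) hh).ne'⟩
  have hζ : IsPrimitiveRoot ((q : K) ^ h) k :=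
    hk ▸ (IsPrimitiveRoot.coe_units_iff.mpr (hq ▸ IsPrimitiveRoot.orderOf q)).pow_of_dvd hh.ne' hdvd
  obtain ⟨α, β, hα, hβ, b, hXb', hYb'⟩ :=
    IsIrreduciblePair.exists_basis hζ hXb.injective hYb.injective (LinearMap.ext hrel) hsimple
  refine ⟨α, β, hα, hβ, b.equivFun.conj X, b.equivFun.conj Y, b.equivFun.symm,
    fun a => b.equivFun_conj_single (hXb' a), fun a => b.equivFun_conj_single (hYb' a),
    fun v => ?_, fun v => ?_⟩ <;>
  simp [LinearEquiv.conj_apply]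
end
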